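/- arXiv:2011.07158 — 2 statements merged into one kernel-verified Lean document; each statement's English description precedes it below -/
import Mathlib

section
/- Let μ⁺, μ⁻ be finite measures on ℝᵖ of equal positive total mass with disjoint supports, let f* : ℝᵖ → ℝ be measurable such that f*♯μ⁺ and f*♯μ⁻ are non-atomic, and let F₊, F₋ be the CDFs of the normalized measures f*♯(μ⁺/μ⁺(ℝᵖ)), f*♯(μ⁻/μ⁻(ℝᵖ)). Let Q : [0,1] → ℝ be continuous and non-decreasing, and define f_Q(x) = Q(F₊(f*(x))) for x in supp(μ⁺), f_Q(x) = Q(F₋(f*(x))) for x in supp(μ⁻), and f_Q(x) = f*(x) otherwise. Then f_Q♯μ⁺ = f_Q♯μ⁻. -/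
open MeasureTheory Classical

/-- Pushforward under `g` of the normalization of `μ` to a probability measure. -/
noncomputable def normPush {α : Type*} [MeasurableSpace α]
    (μ : Measure α) (g : α → ℝ) : Measure ℝ :=
  ((μ Set.univ)⁻¹ • μ).map g

/-- Cumulative distribution function of a measure on `ℝ` (as a real number). -/
noncomputable def cdfR (ν : Measure ℝ) (t : ℝ) : ℝ := (ν (Set.Iic t)).toReal

lemma cdfR_mono (ν : Measure ℝ) [IsFiniteMeasure ν] : Monotone (cdfR ν) := fun a b hab =>
  ENNReal.toReal_mono (measure_ne_top ν _) (measure_mono (Set.Iic_subset_Iic.2 hab))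

lemma cdfR_nonneg (ν : Measure ℝ) (t : ℝ) : 0 ≤ cdfR ν t := ENNReal.toReal_nonneg

lemma cdfR_le_one (ν : Measure ℝ) [IsProbabilityMeasure ν] (t : ℝ) : cdfR ν t ≤ 1 := by
  have : ν (Set.Iic t) ≤ 1 := prob_le_one
  simpa [cdfR] using ENNReal.toReal_le_of_le_ofReal zero_le_one (by simpa using this)

lemma cdfR_eq_cdf (ν : Measure ℝ) [IsProbabilityMeasure ν] :
    cdfR ν = ProbabilityTheory.cdf ν := by
  funext x; rw [ProbabilityTheory.cdf_eq_real]; rfl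

lemma ofReal_cdfR (ν : Measure ℝ) [IsProbabilityMeasure ν] (t : ℝ) :
    ENNReal.ofReal (cdfR ν t) = ν (Set.Iic t) := by
  rw [cdfR_eq_cdf]; exact ProbabilityTheory.ofReal_cdf ν t

lemma cdfR_continuous (ν : Measure ℝ) [IsProbabilityMeasure ν] (hna : ∀ t : ℝ, ν {t} = 0) :
    Continuous (cdfR ν) := by
  rw [cdfR_eq_cdf]
  set f := ProbabilityTheory.cdf ν with hf
  have hm : Monotone ⇑f := f.mono
  rw [continuous_iff_continuousAt]
  intro a
  rw [hm.continuousAt_iff_leftLim_eq_rightLim]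
  have hs : f.measure {a} = ENNReal.ofReal (f a - Function.leftLim (⇑f) a) :=
    f.measure_singleton a
  rw [ProbabilityTheory.measure_cdf, hna a] at hs
  have h1 : Function.leftLim (⇑f) a = f a := by
    have h3 : Function.leftLim (⇑f) a ≤ f a := hm.leftLim_le le_rfl
    have h2 : f a - Function.leftLim (⇑f) a ≤ 0 := by
      by_contra h
      push_neg at h
      exact (ENNReal.ofReal_pos.2 h).ne' hs.symm
    linarith
  have h2 : Function.rightLim (⇑f) a = f a := by
    refine hm.continuousWithinAt_Ioi_iff_rightLim_eq.1 ?_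
    exact (f.right_continuous a).mono Set.Ioi_subset_Ici_self
  rw [h1, h2]

/-- Probability integral transform: pushforward of a non-atomic probability measure
through its own CDF. -/
lemma map_cdfR_Iic (ν : Measure ℝ) [IsProbabilityMeasure ν] (hna : ∀ t : ℝ, ν {t} = 0)
    (x : ℝ) : ν.map (cdfR ν) (Set.Iic x) = ENNReal.ofReal (min 1 x) := by
  have hm : Monotone (cdfR ν) := cdfR_mono ν
  have hc : Continuous (cdfR ν) := cdfR_continuous ν hna
  rw [Measure.map_apply hm.measurable measurableSet_Iic]
  have hSdef : cdfR ν ⁻¹' Set.Iic x = {t | cdfR ν t ≤ x} := rfl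
  by_cases hx1 : 1 ≤ x
  · have : cdfR ν ⁻¹' Set.Iic x = Set.univ := by
      ext t; simp only [Set.mem_preimage, Set.mem_Iic, Set.mem_univ, iff_true]
      exact le_trans (cdfR_le_one ν t) hx1
    rw [this, measure_univ, min_eq_left hx1, ENNReal.ofReal_one]
  push_neg at hx1
  rw [min_eq_right hx1.le]
  by_cases hxneg : x < 0
  · have : cdfR ν ⁻¹' Set.Iic x = ∅ := by
      ext t; simp only [Set.mem_preimage, Set.mem_Iic, Set.mem_empty_iff_false, iff_false]
      exact fun h => absurd (le_trans (cdfR_nonneg ν t) h) (not_le.2 hxneg)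
    rw [this, measure_empty, ENNReal.ofReal_of_nonpos hxneg.le]
  push_neg at hxneg
  set S := cdfR ν ⁻¹' Set.Iic x with hS
  -- S is bounded above since cdfR → 1 > x at +∞
  have htop : Filter.Tendsto (cdfR ν) Filter.atTop (nhds 1) := by
    rw [cdfR_eq_cdf]; exact ProbabilityTheory.tendsto_cdf_atTop ν
  obtain ⟨T, hT⟩ : ∃ T : ℝ, ∀ t ≥ T, x < cdfR ν t := by
    have := htop.eventually (eventually_gt_nhds hx1)
    exact this.exists_forall_of_atTop
  have hbdd : BddAbove S := by
    refine ⟨T, fun t ht => ?_⟩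
    by_contra h
    push_neg at h
    exact absurd ht (not_le.2 (hT t h.le))
  rcases Set.eq_empty_or_nonempty S with hSe | hSne
  · -- S empty: then x must be 0 (else cdfR → 0 gives a point in S)
    rw [hSe, measure_empty]
    have hbot : Filter.Tendsto (cdfR ν) Filter.atBot (nhds 0) := by
      rw [cdfR_eq_cdf]; exact ProbabilityTheory.tendsto_cdf_atBot ν
    by_cases hx0 : x = 0
    · rw [hx0, ENNReal.ofReal_zero]
    · exfalso
      have hx0' : 0 < x := lt_of_le_of_ne hxneg (Ne.symm hx0)
      have := (hbot.eventually (eventually_lt_nhds hx0')).exists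
      obtain ⟨t, ht⟩ := this
      exact Set.eq_empty_iff_forall_notMem.1 hSe t (le_of_lt ht)
  · set s := sSup S with hs
    have hcs : IsClosed S := IsClosed.preimage hc isClosed_Iic
    have hsS : s ∈ S := hcs.csSup_mem hSne hbdd
    have hSI : S = Set.Iic s := by
      ext t
      constructor
      · exact fun ht => le_csSup hbdd ht
      · intro ht
        exact le_trans (hm ht) hsS
    have hfs : cdfR ν s = x := by
      refine le_antisymm hsS ?_
      -- for t > s, cdfR ν t > x; take limit from the right
      have h1 : Filter.Tendsto (cdfR ν) (nhdsWithin s (Set.Ioi s)) (nhds (cdfR ν s)) :=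
        (hc.continuousAt).continuousWithinAt
      refine ge_of_tendsto h1 ?_
      filter_upwards [self_mem_nhdsWithin] with t ht
      by_contra h
      push_neg at h
      have : t ∈ S := h.le
      rw [hSI] at this
      exact absurd (Set.mem_Iic.1 this) (not_le.2 ht)
    rw [hSI, ← ofReal_cdfR, hfs]

theorem stmt_8 {p : ℕ} (μp μm : Measure (Fin p → ℝ))
    [IsFiniteMeasure μp] [IsFiniteMeasure μm]
    (hmass : μp Set.univ = μm Set.univ) (hpos : 0 < μp Set.univ)
    (Ap Am : Set (Fin p → ℝ)) (hApm : MeasurableSet Ap) (hAmm : MeasurableSet Am)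
    (hdisj : Disjoint Ap Am) (hAp : μp Apᶜ = 0) (hAm : μm Amᶜ = 0)
    (fstar : (Fin p → ℝ) → ℝ) (hfs : Measurable fstar)
    (hnap : ∀ t : ℝ, μp.map fstar {t} = 0) (hnam : ∀ t : ℝ, μm.map fstar {t} = 0)
    (Q : ℝ → ℝ) (hQc : ContinuousOn Q (Set.Icc 0 1)) (hQm : MonotoneOn Q (Set.Icc 0 1)) :
    μp.map (fun x =>
        if x ∈ Ap then Q (cdfR (normPush μp fstar) (fstar x))
        else if x ∈ Am then Q (cdfR (normPush μm fstar) (fstar x))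
        else fstar x) =
      μm.map (fun x =>
        if x ∈ Ap then Q (cdfR (normPush μp fstar) (fstar x))
        else if x ∈ Am then Q (cdfR (normPush μm fstar) (fstar x))
        else fstar x) := by
  set c : ENNReal := μp Set.univ with hc
  have hc0 : c ≠ 0 := hpos.ne'
  have hctop : c ≠ ⊤ := measure_ne_top μp _
  -- normPush as scaled maps
  have hnp : normPush μp fstar = c⁻¹ • μp.map fstar := by
    rw [normPush, Measure.map_smul]
  have hnm : normPush μm fstar = c⁻¹ • μm.map fstar := by
    rw [normPush, Measure.map_smul, ← hmass]
  set νp := normPush μp fstar with hνp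
  set νm := normPush μm fstar with hνm
  have hprobp : IsProbabilityMeasure νp := by
    constructor
    rw [hnp, Measure.smul_apply, Measure.map_apply hfs MeasurableSet.univ]
    simp only [Set.preimage_univ, smul_eq_mul]
    exact ENNReal.inv_mul_cancel hc0 hctop
  have hprobm : IsProbabilityMeasure νm := by
    constructor
    rw [hnm, Measure.smul_apply, Measure.map_apply hfs MeasurableSet.univ]
    simp only [Set.preimage_univ, smul_eq_mul]
    rw [← hmass]
    exact ENNReal.inv_mul_cancel hc0 hctop
  have hnap' : ∀ t : ℝ, νp {t} = 0 := by
    intro t; rw [hnp, Measure.smul_apply, hnap t, smul_zero]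
  have hnam' : ∀ t : ℝ, νm {t} = 0 := by
    intro t; rw [hnm, Measure.smul_apply, hnam t, smul_zero]
  -- clamp and Q'
  set clamp : ℝ → ℝ := fun t => min (max t 0) 1 with hclamp
  have hclampc : Continuous clamp := (continuous_id.max continuous_const).min continuous_const
  have hclampmem : ∀ t, clamp t ∈ Set.Icc (0:ℝ) 1 := fun t =>
    ⟨le_min (le_max_right t 0) zero_le_one, min_le_right _ _⟩
  set Q' : ℝ → ℝ := fun t => Q (clamp t) with hQ'
  have hQ'c : Continuous Q' := hQc.comp_continuous hclampc hclampmem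
  have hQ'eq : ∀ t ∈ Set.Icc (0:ℝ) 1, Q' t = Q t := by
    intro t ht
    simp only [hQ', hclamp]
    rw [max_eq_left ht.1, min_eq_left ht.2]
  set Fp := cdfR νp with hFp
  set Fm := cdfR νm with hFm
  have hFpmem : ∀ t, Fp t ∈ Set.Icc (0:ℝ) 1 := fun t => ⟨cdfR_nonneg νp t, cdfR_le_one νp t⟩
  have hFmmem : ∀ t, Fm t ∈ Set.Icc (0:ℝ) 1 := fun t => ⟨cdfR_nonneg νm t, cdfR_le_one νm t⟩
  -- a.e. rewriting
  have haep : ∀ᵐ x ∂μp, x ∈ Ap := by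
    rw [ae_iff]
    exact hAp
  have haem : ∀ᵐ x ∂μm, x ∈ Am := by
    rw [ae_iff]
    exact hAm
  have hmapp : μp.map (fun x =>
        if x ∈ Ap then Q (Fp (fstar x))
        else if x ∈ Am then Q (Fm (fstar x))
        else fstar x) = μp.map (fun x => Q' (Fp (fstar x))) := by
    refine Measure.map_congr ?_
    filter_upwards [haep] with x hx
    simp only [hx, if_true]
    exact (hQ'eq _ (hFpmem (fstar x))).symm
  have hmapm : μm.map (fun x =>
        if x ∈ Ap then Q (Fp (fstar x))
        else if x ∈ Am then Q (Fm (fstar x))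
        else fstar x) = μm.map (fun x => Q' (Fm (fstar x))) := by
    refine Measure.map_congr ?_
    filter_upwards [haem] with x hx
    have hxnp : x ∉ Ap := fun h => (hdisj.ne_of_mem h hx) rfl
    simp only [hxnp, if_false, hx, if_true]
    exact (hQ'eq _ (hFmmem (fstar x))).symm
  rw [hmapp, hmapm]
  -- decompose maps
  have hFpm : Measurable Fp := (cdfR_mono νp).measurable
  have hFmm : Measurable Fm := (cdfR_mono νm).measurable
  have hdecomp : ∀ (μ : Measure (Fin p → ℝ)) (F : ℝ → ℝ) (hF : Measurable F),
      μ.map (fun x => Q' (F (fstar x))) = ((μ.map fstar).map F).map Q' := by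
    intro μ F hF
    rw [Measure.map_map hF hfs, Measure.map_map hQ'c.measurable (hF.comp hfs)]
    rfl
  rw [hdecomp μp Fp hFpm, hdecomp μm Fm hFmm]
  -- express μ.map fstar = c • ν
  have hmp : μp.map fstar = c • νp := by
    rw [hnp, smul_smul, ENNReal.mul_inv_cancel hc0 hctop, one_smul]
  have hmm : μm.map fstar = c • νm := by
    rw [hnm, smul_smul, ENNReal.mul_inv_cancel hc0 hctop, one_smul]
  rw [hmp, hmm]
  simp only [Measure.map_smul]
  have hkey : νp.map Fp = νm.map Fm := by
    refine Measure.ext_of_Iic (νp.map Fp) (νm.map Fm) ?_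
    intro x
    rw [map_cdfR_Iic νp hnap' x, map_cdfR_Iic νm hnam' x]
  rw [hkey]
end

section
/- Let μ₁, μ₂ be non-atomic probability measures on ℝ with finite second moments and quantile functions F₁⁻¹, F₂⁻¹, and let p₁, p₂ ≥ 0 with p₁ + p₂ = 1. The measure ν̄ = (p₁F₁⁻¹ + p₂F₂⁻¹)♯Unif[0,1] minimizes ν ↦ p₁W₂²(ν, μ₁) + p₂W₂²(ν, μ₂) over probability measures ν on ℝ with finite second moment. -/
open MeasureTheory

/-- Quantile (generalized inverse CDF) function of a measure on `ℝ`. -/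
noncomputable def quantileFn (ν : Measure ℝ) (u : ℝ) : ℝ := sInf {t : ℝ | u ≤ cdfR ν t}

/-- Squared Wasserstein-2 distance between measures on `ℝ`, via the quantile formula. -/
noncomputable def W2sq (μ ν : Measure ℝ) : ℝ :=
  ∫ u in Set.Icc (0 : ℝ) 1, (quantileFn μ u - quantileFn ν u) ^ 2

open Set Filter Topology ProbabilityTheory

namespace Stmt18Aux

lemma cdfR_eq (ν : Measure ℝ) [IsProbabilityMeasure ν] (t : ℝ) : cdfR ν t = cdf ν t :=
  (cdf_eq_real ν t).symm

lemma quantile_set_nonempty (ν : Measure ℝ) [IsProbabilityMeasure ν] {u : ℝ} (h1 : u < 1) :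
    {t : ℝ | u ≤ cdfR ν t}.Nonempty := by
  obtain ⟨s, hs⟩ := ((tendsto_cdf_atTop ν).eventually (eventually_ge_nhds h1)).exists
  exact ⟨s, by rw [Set.mem_setOf_eq, cdfR_eq]; exact hs⟩

lemma quantile_set_bddBelow (ν : Measure ℝ) [IsProbabilityMeasure ν] {u : ℝ} (h0 : 0 < u) :
    BddBelow {t : ℝ | u ≤ cdfR ν t} := by
  obtain ⟨s₀, hs₀⟩ := ((tendsto_cdf_atBot ν).eventually (eventually_lt_nhds h0)).exists
  refine ⟨s₀, fun s hs => ?_⟩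
  by_contra hlt
  push_neg at hlt
  have : cdf ν s ≤ cdf ν s₀ := monotone_cdf ν hlt.le
  rw [Set.mem_setOf_eq, cdfR_eq] at hs
  linarith

lemma quantile_le_iff (ν : Measure ℝ) [IsProbabilityMeasure ν] {u t : ℝ}
    (h0 : 0 < u) (h1 : u < 1) :
    quantileFn ν u ≤ t ↔ u ≤ cdfR ν t := by
  constructor
  · intro h
    rw [cdfR_eq]
    have key : ∀ s, t < s → u ≤ cdf ν s := by
      intro s hts
      obtain ⟨x, hx, hxs⟩ := exists_lt_of_csInf_lt (quantile_set_nonempty ν h1)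
        (lt_of_le_of_lt h hts)
      rw [Set.mem_setOf_eq, cdfR_eq] at hx
      exact hx.trans (monotone_cdf ν hxs.le)
    have htend : Filter.Tendsto (cdf ν) (𝓝[>] t) (𝓝 (cdf ν t)) :=
      ((cdf ν).right_continuous t).mono_left (nhdsWithin_mono _ Ioi_subset_Ici_self)
    exact ge_of_tendsto htend (eventually_nhdsWithin_of_forall fun s hs => key s hs)
  · intro h
    exact csInf_le (quantile_set_bddBelow ν h0) h

lemma quantile_monotoneOn (ν : Measure ℝ) [IsProbabilityMeasure ν] :
    MonotoneOn (quantileFn ν) (Set.Ioo (0 : ℝ) 1) := by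
  intro a ha b hb hab
  exact csInf_le_csInf (quantile_set_bddBelow ν ha.1) (quantile_set_nonempty ν hb.2)
    (fun s hs => le_trans hab hs)

/-- The quantile function pushes `Unif(0,1)` forward to `ν`. -/
lemma map_quantile (ν : Measure ℝ) [IsProbabilityMeasure ν] :
    Measure.map (quantileFn ν) (volume.restrict (Set.Ioo (0 : ℝ) 1)) = ν := by
  have hQm : AEMeasurable (quantileFn ν) (volume.restrict (Set.Ioo (0 : ℝ) 1)) :=
    aemeasurable_restrict_of_monotoneOn measurableSet_Ioo (quantile_monotoneOn ν)
  haveI : IsProbabilityMeasure (volume.restrict (Set.Ioo (0 : ℝ) 1)) :=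
    ⟨by rw [Measure.restrict_apply_univ]; simp [Real.volume_Ioo]⟩
  haveI : IsProbabilityMeasure (Measure.map (quantileFn ν) (volume.restrict (Set.Ioo (0 : ℝ) 1))) :=
    Measure.isProbabilityMeasure_map hQm
  refine Measure.ext_of_Iic _ _ (fun t => ?_)
  rw [Measure.map_apply_of_aemeasurable hQm measurableSet_Iic,
    Measure.restrict_apply' measurableSet_Ioo]
  set c := cdfR ν t with hc
  have hc0 : 0 ≤ c := ENNReal.toReal_nonneg
  have hc1 : c ≤ 1 := by rw [hc, cdfR_eq]; exact cdf_le_one ν t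
  have hupper : quantileFn ν ⁻¹' Set.Iic t ∩ Set.Ioo 0 1 ⊆ Set.Ioc 0 c := by
    rintro v ⟨hvt, hv01⟩
    exact ⟨hv01.1, (quantile_le_iff ν hv01.1 hv01.2).mp hvt⟩
  have hlower : Set.Ioo 0 c ⊆ quantileFn ν ⁻¹' Set.Iic t ∩ Set.Ioo 0 1 := by
    rintro v ⟨hv0, hvc⟩
    have hv1 : v < 1 := lt_of_lt_of_le hvc hc1
    exact ⟨(quantile_le_iff ν hv0 hv1).mpr hvc.le, hv0, hv1⟩
  have hvol : volume (quantileFn ν ⁻¹' Set.Iic t ∩ Set.Ioo 0 1) = ENNReal.ofReal c := by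
    refine le_antisymm ?_ ?_
    · calc volume (quantileFn ν ⁻¹' Set.Iic t ∩ Set.Ioo 0 1) ≤ volume (Set.Ioc 0 c) :=
            measure_mono hupper
        _ = ENNReal.ofReal c := by simp [Real.volume_Ioc]
    · calc ENNReal.ofReal c = volume (Set.Ioo 0 c) := by simp [Real.volume_Ioo]
        _ ≤ _ := measure_mono hlower
  rw [hvol, hc, cdfR_eq, ofReal_cdf]

/-- Square integrability of the quantile function from the second moment. -/
lemma memLp_quantile (ν : Measure ℝ) [IsProbabilityMeasure ν]
    (hm : Integrable (fun t : ℝ => t ^ 2) ν) :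
    MemLp (quantileFn ν) 2 (volume.restrict (Set.Ioo (0 : ℝ) 1)) := by
  have hQm : AEMeasurable (quantileFn ν) (volume.restrict (Set.Ioo (0 : ℝ) 1)) :=
    aemeasurable_restrict_of_monotoneOn measurableSet_Ioo (quantile_monotoneOn ν)
  have hmap := map_quantile ν
  have hInt : Integrable (fun u => (quantileFn ν u) ^ 2) (volume.restrict (Set.Ioo (0 : ℝ) 1)) := by
    have := (integrable_map_measure
      (f := quantileFn ν) (g := fun t : ℝ => t ^ 2)
      (by apply Measurable.aestronglyMeasurable; fun_prop) hQm).mp (by rwa [hmap])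
    exact this
  exact (memLp_two_iff_integrable_sq hQm.aestronglyMeasurable).mpr hInt

/-- Discontinuity points of a function monotone on `(0,1)` form a countable set. -/
lemma countable_bad {g : ℝ → ℝ} (hg : MonotoneOn g (Set.Ioo (0 : ℝ) 1)) :
    Set.Countable {u | u ∈ Set.Ioo (0 : ℝ) 1 ∧ ¬ContinuousAt g u} := by
  have main : ∀ a b : ℝ, 0 < a → a < b → b < 1 →
      Set.Countable {u | u ∈ Set.Ioo a b ∧ ¬ContinuousAt g u} := by
    intro a b ha hab hb1
    set cl : ℝ → ℝ := fun u => max a (min u b) with hcl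
    have hcl_mem : ∀ u, cl u ∈ Set.Ioo (0 : ℝ) 1 := by
      intro u
      constructor
      · exact lt_of_lt_of_le ha (le_max_left _ _)
      · exact lt_of_le_of_lt (max_le hab.le (min_le_right _ _)) hb1
    have hmono : Monotone (g ∘ cl) := by
      intro u v huv
      exact hg (hcl_mem u) (hcl_mem v)
        (max_le_max le_rfl (min_le_min_right _ huv))
    refine hmono.countable_not_continuousAt.mono ?_
    rintro u ⟨hu, hnc⟩
    simp only [Set.mem_setOf_eq]
    intro hcont
    apply hnc
    have heq : g ∘ cl =ᶠ[𝓝 u] g := by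
      filter_upwards [Ioo_mem_nhds hu.1 hu.2] with v hv
      simp only [Function.comp_apply, hcl, min_eq_left hv.2.le, max_eq_right hv.1.le]
    exact hcont.congr heq
  have hsub : {u | u ∈ Set.Ioo (0 : ℝ) 1 ∧ ¬ContinuousAt g u} ⊆
      ⋃ n : ℕ, {u | u ∈ Set.Ioo (1 / (n + 3) : ℝ) (1 - 1 / (n + 3)) ∧ ¬ContinuousAt g u} := by
    rintro u ⟨hu, hnc⟩
    have hmin : 0 < min u (1 - u) := lt_min hu.1 (by linarith [hu.2])
    obtain ⟨n, hn⟩ := exists_nat_gt (1 / min u (1 - u))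
    refine Set.mem_iUnion.mpr ⟨n, ⟨⟨?_, ?_⟩, hnc⟩⟩
    · have h1 : 1 / ((n : ℝ) + 3) < min u (1 - u) := by
        rw [div_lt_iff₀ (by positivity)]
        rw [div_lt_iff₀ hmin] at hn
        nlinarith [hmin.le]
      exact lt_of_lt_of_le h1 (min_le_left _ _)
    · have h1 : 1 / ((n : ℝ) + 3) < min u (1 - u) := by
        rw [div_lt_iff₀ (by positivity)]
        rw [div_lt_iff₀ hmin] at hn
        nlinarith [hmin.le]
      have := lt_of_lt_of_le h1 (min_le_right _ _)
      linarith
  refine Set.Countable.mono hsub (Set.countable_iUnion fun n => ?_)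
  refine main _ _ (by positivity) ?_ ?_
  · have : (1 : ℝ) / ((n : ℝ) + 3) ≤ 1 / 3 := by
      apply div_le_div_of_nonneg_left (by norm_num) (by norm_num)
      · have : (0 : ℝ) ≤ (n : ℝ) := Nat.cast_nonneg n
        linarith
    linarith
  · have : (0 : ℝ) < 1 / ((n : ℝ) + 3) := by positivity
    linarith

/-- At continuity points, the quantile function of the pushforward of `Unif(0,1)` by a
monotone map `g` coincides with `g`. -/
lemma quantile_map_eq {g : ℝ → ℝ} (hg : MonotoneOn g (Set.Ioo (0 : ℝ) 1))
    (hgm : AEMeasurable g (volume.restrict (Set.Ioo (0 : ℝ) 1)))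
    {u : ℝ} (hu : u ∈ Set.Ioo (0 : ℝ) 1) (hc : ContinuousAt g u) :
    quantileFn (Measure.map g (volume.restrict (Set.Ioo (0 : ℝ) 1))) u = g u := by
  set νb := Measure.map g (volume.restrict (Set.Ioo (0 : ℝ) 1)) with hνb
  have hcdf : ∀ t, cdfR νb t = (volume (g ⁻¹' Set.Iic t ∩ Set.Ioo 0 1)).toReal := by
    intro t
    rw [hνb]
    unfold cdfR
    rw [Measure.map_apply_of_aemeasurable hgm measurableSet_Iic,
      Measure.restrict_apply' measurableSet_Ioo]
  -- Claim 1 : u ≤ cdfR νb (g u)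
  have claim1 : u ≤ cdfR νb (g u) := by
    rw [hcdf]
    have hsub : Set.Ioo 0 u ⊆ g ⁻¹' Set.Iic (g u) ∩ Set.Ioo 0 1 := by
      rintro v ⟨hv0, hvu⟩
      have hv01 : v ∈ Set.Ioo (0 : ℝ) 1 := ⟨hv0, hvu.trans hu.2⟩
      exact ⟨hg hv01 hu hvu.le, hv01⟩
    have hle : ENNReal.ofReal u ≤ volume (g ⁻¹' Set.Iic (g u) ∩ Set.Ioo 0 1) := by
      calc ENNReal.ofReal u = volume (Set.Ioo 0 u) := by simp [Real.volume_Ioo]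
        _ ≤ _ := measure_mono hsub
    have hfin : volume (g ⁻¹' Set.Iic (g u) ∩ Set.Ioo 0 1) ≠ ⊤ := by
      refine ne_top_of_le_ne_top ?_ (measure_mono Set.inter_subset_right)
      simp [Real.volume_Ioo]
    calc u = (ENNReal.ofReal u).toReal := by rw [ENNReal.toReal_ofReal hu.1.le]
      _ ≤ _ := ENNReal.toReal_mono hfin hle
  -- Claim 2 : members of the sublevel set dominate g on (0, u)
  have claim2 : ∀ t, u ≤ cdfR νb t → ∀ v ∈ Set.Ioo (0 : ℝ) u, g v ≤ t := by
    intro t ht v hv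
    by_contra hvt
    push_neg at hvt
    have hv01 : v ∈ Set.Ioo (0 : ℝ) 1 := ⟨hv.1, hv.2.trans hu.2⟩
    have hsub : g ⁻¹' Set.Iic t ∩ Set.Ioo 0 1 ⊆ Set.Ioo 0 v := by
      rintro w ⟨hwt, hw01⟩
      refine ⟨hw01.1, ?_⟩
      by_contra hwv
      push_neg at hwv
      have : g v ≤ g w := hg hv01 hw01 hwv
      have : g v ≤ t := this.trans hwt
      linarith
    have hle : volume (g ⁻¹' Set.Iic t ∩ Set.Ioo 0 1) ≤ ENNReal.ofReal v := by
      calc volume (g ⁻¹' Set.Iic t ∩ Set.Ioo 0 1) ≤ volume (Set.Ioo 0 v) := measure_mono hsub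
        _ = ENNReal.ofReal v := by simp [Real.volume_Ioo]
    have : cdfR νb t ≤ v := by
      rw [hcdf]
      exact ENNReal.toReal_le_of_le_ofReal hv.1.le hle
    linarith [hv.2]
  have hbdd : BddBelow {t : ℝ | u ≤ cdfR νb t} := by
    refine ⟨g (u / 2), fun t ht => ?_⟩
    exact claim2 t ht (u / 2) ⟨by linarith [hu.1], by linarith [hu.1]⟩
  refine le_antisymm (csInf_le hbdd claim1) (le_csInf ⟨g u, claim1⟩ ?_)
  intro t ht
  by_contra hlt
  push_neg at hlt
  have hev : ∀ᶠ v in 𝓝[<] u, t < g v :=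
    ((hc.eventually (eventually_gt_nhds hlt)).filter_mono nhdsWithin_le_nhds)
  have hmem : Set.Ioo (0 : ℝ) u ∈ 𝓝[<] u := Ioo_mem_nhdsLT_of_mem ⟨hu.1, le_rfl⟩
  obtain ⟨v, hvgt, hv⟩ := (hev.and (eventually_of_mem hmem fun v hv => hv)).exists
  exact absurd (claim2 t ht v hv) (not_le.mpr hvgt)

end Stmt18Aux

open Stmt18Aux in
theorem stmt_18 (μ₁ μ₂ : Measure ℝ) [IsProbabilityMeasure μ₁] [IsProbabilityMeasure μ₂]
    (h₁ : ∀ t : ℝ, μ₁ {t} = 0) (h₂ : ∀ t : ℝ, μ₂ {t} = 0)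
    (hm₁ : Integrable (fun t : ℝ => t ^ 2) μ₁) (hm₂ : Integrable (fun t : ℝ => t ^ 2) μ₂)
    (p₁ p₂ : ℝ) (hp₁ : 0 ≤ p₁) (hp₂ : 0 ≤ p₂) (hsum : p₁ + p₂ = 1) :
    ∀ ν : Measure ℝ, IsProbabilityMeasure ν → Integrable (fun t : ℝ => t ^ 2) ν →
      p₁ * W2sq ((volume.restrict (Set.Icc (0 : ℝ) 1)).map
            (fun u => p₁ * quantileFn μ₁ u + p₂ * quantileFn μ₂ u)) μ₁ +
        p₂ * W2sq ((volume.restrict (Set.Icc (0 : ℝ) 1)).map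
            (fun u => p₁ * quantileFn μ₁ u + p₂ * quantileFn μ₂ u)) μ₂ ≤
      p₁ * W2sq ν μ₁ + p₂ * W2sq ν μ₂ := by
  intro ν hνP hmν
  have hL : volume.restrict (Set.Icc (0 : ℝ) 1) = volume.restrict (Set.Ioo (0 : ℝ) 1) :=
    (Measure.restrict_congr_set Ioo_ae_eq_Icc).symm
  set L := volume.restrict (Set.Ioo (0 : ℝ) 1) with hLdef
  set q₁ := quantileFn μ₁ with hq₁def
  set q₂ := quantileFn μ₂ with hq₂def
  set Q := quantileFn ν with hQdef
  set g : ℝ → ℝ := fun u => p₁ * q₁ u + p₂ * q₂ u with hgdef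
  have hg : MonotoneOn g (Set.Ioo (0 : ℝ) 1) := by
    intro a ha b hb hab
    have h1 := quantile_monotoneOn μ₁ ha hb hab
    have h2 := quantile_monotoneOn μ₂ ha hb hab
    simp only [hgdef]
    have := mul_le_mul_of_nonneg_left h1 hp₁
    have := mul_le_mul_of_nonneg_left h2 hp₂
    linarith
  have hgm : AEMeasurable g L :=
    aemeasurable_restrict_of_monotoneOn measurableSet_Ioo hg
  -- a.e. identification of the quantile function of the barycenter
  have hae : ∀ᵐ u ∂L, quantileFn (Measure.map g L) u = g u := by
    have h1 : ∀ᵐ u ∂L, u ∈ Set.Ioo (0 : ℝ) 1 := ae_restrict_mem measurableSet_Ioo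
    have h2 : ∀ᵐ u ∂L, ¬(u ∈ Set.Ioo (0 : ℝ) 1 ∧ ¬ContinuousAt g u) := by
      rw [ae_iff]
      simp only [not_not]
      rw [hLdef, Measure.restrict_apply' measurableSet_Ioo]
      refine measure_mono_null ?_ ((countable_bad hg).measure_zero volume)
      intro x hx
      simp only [Set.mem_inter_iff, Set.mem_setOf_eq, not_not] at hx ⊢
      exact ⟨hx.1.1, hx.1.2⟩
    filter_upwards [h1, h2] with u hu hcu
    have hc : ContinuousAt g u := by
      by_contra hnc
      exact hcu ⟨hu, hnc⟩
    exact quantile_map_eq hg hgm hu hc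
  -- square integrability
  have hq₁2 : MemLp q₁ 2 L := memLp_quantile μ₁ hm₁
  have hq₂2 : MemLp q₂ 2 L := memLp_quantile μ₂ hm₂
  have hQ2 : MemLp Q 2 L := memLp_quantile ν hmν
  have hG2 : MemLp g 2 L := (hq₁2.const_mul p₁).add (hq₂2.const_mul p₂)
  have I1 : Integrable (fun u => (g u - q₁ u) ^ 2) L := (hG2.sub hq₁2).integrable_sq
  have I2 : Integrable (fun u => (g u - q₂ u) ^ 2) L := (hG2.sub hq₂2).integrable_sq
  have J1 : Integrable (fun u => (Q u - q₁ u) ^ 2) L := (hQ2.sub hq₁2).integrable_sq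
  have J2 : Integrable (fun u => (Q u - q₂ u) ^ 2) L := (hQ2.sub hq₂2).integrable_sq
  -- rewrite all the W2sq terms
  simp only [W2sq, hL]
  have hW1 : ∫ u, (quantileFn (Measure.map g L) u - q₁ u) ^ 2 ∂L
      = ∫ u, (g u - q₁ u) ^ 2 ∂L := by
    refine integral_congr_ae ?_
    filter_upwards [hae] with u hu
    rw [hu]
  have hW2 : ∫ u, (quantileFn (Measure.map g L) u - q₂ u) ^ 2 ∂L
      = ∫ u, (g u - q₂ u) ^ 2 ∂L := by
    refine integral_congr_ae ?_
    filter_upwards [hae] with u hu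
    rw [hu]
  rw [hW1, hW2]
  -- the key pointwise inequality
  have key : ∀ u, p₁ * (g u - q₁ u) ^ 2 + p₂ * (g u - q₂ u) ^ 2 ≤
      p₁ * (Q u - q₁ u) ^ 2 + p₂ * (Q u - q₂ u) ^ 2 := by
    intro u
    have h2 : p₂ = 1 - p₁ := by linarith
    simp only [hgdef]
    rw [h2]
    nlinarith [sq_nonneg (Q u - (p₁ * q₁ u + (1 - p₁) * q₂ u))]
  have hint : ∫ u, (p₁ * (g u - q₁ u) ^ 2 + p₂ * (g u - q₂ u) ^ 2) ∂L ≤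
      ∫ u, (p₁ * (Q u - q₁ u) ^ 2 + p₂ * (Q u - q₂ u) ^ 2) ∂L := by
    refine integral_mono ((I1.const_mul p₁).add (I2.const_mul p₂))
      ((J1.const_mul p₁).add (J2.const_mul p₂)) key
  calc p₁ * ∫ u, (g u - q₁ u) ^ 2 ∂L + p₂ * ∫ u, (g u - q₂ u) ^ 2 ∂L
      = ∫ u, (p₁ * (g u - q₁ u) ^ 2 + p₂ * (g u - q₂ u) ^ 2) ∂L := by
        rw [integral_add (I1.const_mul p₁) (I2.const_mul p₂), integral_const_mul,
          integral_const_mul]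
    _ ≤ ∫ u, (p₁ * (Q u - q₁ u) ^ 2 + p₂ * (Q u - q₂ u) ^ 2) ∂L := hint
    _ = p₁ * ∫ u, (Q u - q₁ u) ^ 2 ∂L + p₂ * ∫ u, (Q u - q₂ u) ^ 2 ∂L := by
        rw [integral_add (J1.const_mul p₁) (J2.const_mul p₂), integral_const_mul,
          integral_const_mul]
end
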